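/- Equivalence of walks on the triangular lattice (Theorem 2b): if σ_R(p) = σ_M(p) for every lattice site p, then for any initial position and any initial velocity v_k with k odd (k ∈ {1,3,5}), the flipping mirror walk on σ_M and the flipping rotator walk on σ_R have identical position sequences for all times. -/
import Mathlib


/-- The six unit velocities v_k = (cos(kπ/3), sin(kπ/3)) of the triangular
lattice, written in coordinates with respect to the lattice basis
(1,0) and (1/2, √3/2). -/
def triVel (k : ZMod 6) : ℤ × ℤ :=
  if k = 0 then (1, 0) else if k = 1 then (0, 1) else if k = 2 then (-1, 1)
  else if k = 3 then (-1, 0) else if k = 4 then (0, -1) else (1, -1)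

/-- The mirror scattering rule M on 𝕋² (Table 2). -/
def triM (k : ZMod 6) (σ : ℤ) : ZMod 6 :=
  if σ = 1 then
    (if k = 0 then 2 else if k = 1 then 5 else if k = 2 then 4
     else if k = 3 then 1 else if k = 4 then 0 else 3)
  else
    (if k = 0 then 4 else if k = 1 then 3 else if k = 2 then 0
     else if k = 3 then 5 else if k = 4 then 2 else 1)

/-- The rotator scattering rule R on 𝕋² (Table 2). -/
def triR (k : ZMod 6) (σ : ℤ) : ZMod 6 :=
  if σ = 1 then
    (if k = 0 then 4 else if k = 1 then 5 else if k = 2 then 0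
     else if k = 3 then 1 else if k = 4 then 2 else 3)
  else
    (if k = 0 then 2 else if k = 1 then 3 else if k = 2 then 4
     else if k = 3 then 5 else if k = 4 then 0 else 1)

/-- State of a walk on 𝕋²: position (in lattice coordinates), velocity index,
environment of scatterers. -/
structure TriState where
  pos : ℤ × ℤ
  vel : ZMod 6
  env : ℤ × ℤ → ℤ

/-- One step of the flipping dynamics with scattering rule `f`:
the walker is scattered at its current site, moves one step in the new
direction, and the scatterer at the old site flips sign. -/
def triStep (f : ZMod 6 → ℤ → ZMod 6) (s : TriState) : TriState :=
  let k' := f s.vel (s.env s.pos)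
  { pos := s.pos + triVel k', vel := k',
    env := fun q => if q = s.pos then -s.env s.pos else s.env q }

/-- The walk: state after `t` time steps. -/
def triWalk (f : ZMod 6 → ℤ → ZMod 6) (s₀ : TriState) (t : ℕ) : TriState :=
  (triStep f)^[t] s₀

/-- Theorem 2b: if σ_R = σ_M everywhere, then for any initial
position and any initial velocity of odd index, the flipping mirror walk on
σ_M and the flipping rotator walk on σ_R have identical positions at all
times. -/
theorem tri_equivalence_odd (σM σR : ℤ × ℤ → ℤ) (hσ : ∀ p, σM p = 1 ∨ σM p = -1)
    (hrel : ∀ p, σR p = σM p) (p₀ : ℤ × ℤ) (k₀ : ZMod 6) (hk : Odd k₀.val) (t : ℕ) :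
    (triWalk triM ⟨p₀, k₀, σM⟩ t).pos = (triWalk triR ⟨p₀, k₀, σR⟩ t).pos := by
  have henv : σR = σM := funext hrel
  rw [henv]
  suffices h : triWalk triM ⟨p₀, k₀, σM⟩ t = triWalk triR ⟨p₀, k₀, σM⟩ t ∧
      Odd ((triWalk triM ⟨p₀, k₀, σM⟩ t).vel).val by rw [h.1]
  induction t with
  | zero => exact ⟨rfl, hk⟩
  | succ n ih =>
    obtain ⟨heq, hodd⟩ := ih
    have hstep : ∀ s : TriState, Odd s.vel.val →
        triStep triM s = triStep triR s ∧ Odd ((triStep triM s).vel).val := by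
      intro s hs
      have hkey : ∀ (k : ZMod 6) (σ : ℤ), Odd k.val →
          triM k σ = triR k σ ∧ Odd (triM k σ).val := by
        intro k σ
        unfold triM triR
        rcases eq_or_ne σ 1 with h | h
        · simp only [if_pos h]; revert k; decide
        · simp only [if_neg h]; revert k; decide
      obtain ⟨h1, h2⟩ := hkey s.vel (s.env s.pos) hs
      exact ⟨by unfold triStep; rw [h1], by simpa only [triStep] using h2⟩
    simp only [triWalk] at heq hodd ⊢
    rw [Function.iterate_succ_apply', Function.iterate_succ_apply', ← heq]
    exact ⟨(hstep _ hodd).1, (hstep _ hodd).2⟩
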